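/- In the randomized-policy MDP setup, let θ and θ' be randomized policies with stationary distributions π^θ and π^{θ'}, means J^θ_μ and J^{θ'}_μ, combined metrics J^θ_{μ,σ} and J^{θ'}_{μ,σ}, and let g^θ be a performance potential for θ. Then J^{θ'}_{μ,σ} - J^{θ}_{μ,σ} = ∑_i π^{θ'} i * ∑_a (θ' i a - θ i a) * ( ∑_j p a i j * g^θ j + r i a - β*(r i a)^2 + 2*β*J^θ_μ*(r i a) ) + β*(J^{θ'}_μ - J^θ_μ)^2. -/

import Mathlib

/-!
Recentring the variance term at the old mean `J^θ_μ` writes `J^{θ'}_{μ,σ}` as the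
`π^{θ'}`-average of the per-action reward `c i a = r i a - β * (r i a - J^θ_μ) ^ 2` plus
`β * (J^{θ'}_μ - J^θ_μ) ^ 2` (parallel axis theorem). For the reward `c`, shared by both policies,
Cao's performance difference formula follows from the Poisson equation for `g^θ` and the
stationarity of `π^{θ'}`. The constant `β * (J^θ_μ) ^ 2` inside `c` cancels because the rows of
`θ` and `θ'` both sum to `1`.
-/

open Matrix Finset

section ParallelAxis

variable {κ : Type*} [Fintype κ] {w : κ → ℝ}

theorem sum_mul_sub_sq_eq_add (hw : ∑ k, w k = 1) (x : κ → ℝ) (m : ℝ) :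
    ∑ k, w k * (x k - m) ^ 2
      = ∑ k, w k * (x k - ∑ l, w l * x l) ^ 2 + (∑ l, w l * x l - m) ^ 2 := by
  set μ := ∑ l, w l * x l with hμ
  have expand : ∀ k, w k * (x k - m) ^ 2 = w k * (x k - μ) ^ 2 + 2 * (μ - m) * (w k * x k)
      + ((μ - m) ^ 2 - 2 * (μ - m) * μ) * w k := fun k => by ring
  rw [sum_congr rfl fun k _ => expand k, sum_add_distrib, sum_add_distrib, ← mul_sum, ← mul_sum,
    ← hμ, hw]
  ring

theorem sum_mul_sub_mul_sub_sq_mean (hw : ∑ k, w k = 1) (x : κ → ℝ) (β m : ℝ) :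
    ∑ k, w k * (x k - β * (x k - ∑ l, w l * x l) ^ 2)
      = ∑ k, w k * (x k - β * (x k - m) ^ 2) + β * (∑ l, w l * x l - m) ^ 2 := by
  simp only [mul_sub, sum_sub_distrib, mul_left_comm _ β, ← mul_sum, sum_mul_sub_sq_eq_add hw x m]
  ring

end ParallelAxis

section RandomizedPolicy

variable {ι A : Type*} [Fintype ι] [Fintype A]

def policyMatrix (p : A → Matrix ι ι ℝ) (θ : ι → A → ℝ) : Matrix ι ι ℝ :=
  fun i j => ∑ a, θ i a * p a i j

theorem sum_mul_sum_mul_eq_sum_prod (π : ι → ℝ) (θ h : ι → A → ℝ) :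
    ∑ i, π i * ∑ a, θ i a * h i a = ∑ x : ι × A, π x.1 * θ x.1 x.2 * h x.1 x.2 := by
  simp only [mul_sum, mul_assoc, Fintype.sum_prod_type]

theorem sum_policy_mul_sub_mul_sub_sq_mean {π : ι → ℝ} {θ : ι → A → ℝ} (hπ : ∑ i, π i = 1)
    (hθ : ∀ i, ∑ a, θ i a = 1) (x : ι → A → ℝ) (β m : ℝ) :
    ∑ i, π i * ∑ a, θ i a * (x i a - β * (x i a - ∑ i, π i * ∑ a, θ i a * x i a) ^ 2)
      = ∑ i, π i * ∑ a, θ i a * (x i a - β * (x i a - m) ^ 2)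
        + β * (∑ i, π i * ∑ a, θ i a * x i a - m) ^ 2 := by
  have hw : ∑ y : ι × A, π y.1 * θ y.1 y.2 = 1 := by
    simpa [hθ, hπ] using (sum_mul_sum_mul_eq_sum_prod π θ fun _ _ => (1 : ℝ)).symm
  simp only [sum_mul_sum_mul_eq_sum_prod]
  exact sum_mul_sub_mul_sub_sq_mean hw (fun y => x y.1 y.2) β m

theorem performance_difference_of_poisson {P P' : Matrix ι ι ℝ} {π' : ι → ℝ}
    (hstat : π' ᵥ* P' = π') (hsum : ∑ i, π' i = 1) {f f' g : ι → ℝ} {η : ℝ}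
    (hg : ∀ i, g i = f i - η + (P *ᵥ g) i) :
    π' ⬝ᵥ (f' + P' *ᵥ g - (f + P *ᵥ g)) = π' ⬝ᵥ f' - η := by
  have hpoisson : f + P *ᵥ g = g + fun _ => η := funext fun i => by
    simp only [Pi.add_apply]; linarith [hg i]
  have hconst : π' ⬝ᵥ (fun _ => η) = η := by
    simp only [dotProduct, ← sum_mul, hsum, one_mul]
  rw [hpoisson, dotProduct_sub, dotProduct_add, dotProduct_add, dotProduct_mulVec, hstat, hconst]
  ring

theorem sum_mul_mulVec_add (p : A → Matrix ι ι ℝ) (θ c : ι → A → ℝ) (g : ι → ℝ) (i : ι) :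
    ∑ a, θ i a * ((p a *ᵥ g) i + c i a) = (policyMatrix p θ *ᵥ g) i + ∑ a, θ i a * c i a := by
  simp only [mul_add, sum_add_distrib, policyMatrix, mulVec, dotProduct, mul_sum, sum_mul,
    mul_assoc]
  rw [sum_comm]

theorem randomized_performance_difference {p : A → Matrix ι ι ℝ} {θ θ' : ι → A → ℝ}
    {π' : ι → ℝ} (hstat : π' ᵥ* policyMatrix p θ' = π') (hsum : ∑ i, π' i = 1)
    {c : ι → A → ℝ} {g : ι → ℝ} {η : ℝ}
    (hg : ∀ i, g i = ∑ a, θ i a * c i a - η + (policyMatrix p θ *ᵥ g) i) :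
    ∑ i, π' i * ∑ a, (θ' i a - θ i a) * ((p a *ᵥ g) i + c i a)
      = ∑ i, π' i * ∑ a, θ' i a * c i a - η := by
  have hinner : ∀ i, ∑ a, (θ' i a - θ i a) * ((p a *ᵥ g) i + c i a)
      = ((fun i => ∑ a, θ' i a * c i a) + policyMatrix p θ' *ᵥ g
        - ((fun i => ∑ a, θ i a * c i a) + policyMatrix p θ *ᵥ g)) i := fun i => by
    simp only [sub_mul, sum_sub_distrib, sum_mul_mulVec_add, Pi.add_apply, Pi.sub_apply]
    ring
  simp only [hinner]
  exact performance_difference_of_poisson hstat hsum hg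

theorem sum_sub_mul_add_const {θ θ' : A → ℝ}
    (h : ∑ a, θ' a = ∑ a, θ a) (x : A → ℝ) (k : ℝ) :
    ∑ a, (θ' a - θ a) * (x a + k) = ∑ a, (θ' a - θ a) * x a := by
  simp only [mul_add, sum_add_distrib, ← sum_mul, sum_sub_distrib, h, sub_self, zero_mul, add_zero]

end RandomizedPolicy

theorem mean_variance_randomized_policy_difference_general
    (S : ℕ) (A : Type) [Fintype A]
    (p : A → Matrix (Fin S) (Fin S) ℝ)
    (r : Fin S → A → ℝ) (β : ℝ)
    (θ θ' : Fin S → A → ℝ)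
    (hθ1 : ∀ i, ∑ a, θ i a = 1)
    (hθ'1 : ∀ i, ∑ a, θ' i a = 1)
    (πθ' : Fin S → ℝ)
    (hπθ'1 : ∑ i, πθ' i = 1)
    (hπθ'stat : ∀ j, ∑ i, πθ' i * (∑ a, θ' i a * p a i j) = πθ' j)
    (Jmu Jmu' Jms Jms' : ℝ)
    (hJmu' : Jmu' = ∑ i, πθ' i * ∑ a, θ' i a * r i a)
    (hJms' : Jms' = ∑ i, πθ' i * ∑ a, θ' i a * (r i a - β * (r i a - Jmu') ^ 2))
    (g : Fin S → ℝ)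
    (hg : ∀ i, g i = (∑ a, θ i a * (r i a - β * (r i a - Jmu) ^ 2)) - Jms
      + ∑ j, (∑ a, θ i a * p a i j) * g j) :
    Jms' - Jms =
      (∑ i, πθ' i * ∑ a, (θ' i a - θ i a) *
        ((∑ j, p a i j * g j) + r i a - β * (r i a) ^ 2 + 2 * β * Jmu * r i a))
      + β * (Jmu' - Jmu) ^ 2 := by
  have hdiff := randomized_performance_difference (p := p) (θ' := θ') (funext hπθ'stat) hπθ'1
    (c := fun i a => r i a - β * (r i a - Jmu) ^ 2) hg
  have hshift := sum_policy_mul_sub_mul_sub_sq_mean hπθ'1 hθ'1 r β Jmu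
  have hterm : ∀ i, ∑ a, (θ' i a - θ i a) *
      ((∑ j, p a i j * g j) + r i a - β * (r i a) ^ 2 + 2 * β * Jmu * r i a)
      = ∑ a, (θ' i a - θ i a) * ((p a *ᵥ g) i + (r i a - β * (r i a - Jmu) ^ 2)) := fun i => by
    conv_rhs => rw [← sum_sub_mul_add_const (by rw [hθ'1, hθ1]) _ (β * Jmu ^ 2)]
    exact sum_congr rfl fun a _ => by simp only [mulVec, dotProduct]; ring
  rw [← hJmu'] at hshift
  rw [hJms', hshift]
  simp only [hterm, hdiff]
  ring

/-- Performance difference formula for randomized policies (equation (37)). -/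
theorem mean_variance_randomized_policy_difference
    (S : ℕ) (hS : 1 ≤ S) (A : Type) [Fintype A] [Nonempty A]
    (p : A → Matrix (Fin S) (Fin S) ℝ)
    (hp0 : ∀ a i j, 0 ≤ p a i j) (hp1 : ∀ a i, ∑ j, p a i j = 1)
    (r : Fin S → A → ℝ) (β : ℝ)
    (θ θ' : Fin S → A → ℝ)
    (hθ0 : ∀ i a, 0 ≤ θ i a) (hθ1 : ∀ i, ∑ a, θ i a = 1)
    (hθ'0 : ∀ i a, 0 ≤ θ' i a) (hθ'1 : ∀ i, ∑ a, θ' i a = 1)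
    (πθ πθ' : Fin S → ℝ)
    (hπθ0 : ∀ i, 0 ≤ πθ i) (hπθ1 : ∑ i, πθ i = 1)
    (hπθstat : ∀ j, ∑ i, πθ i * (∑ a, θ i a * p a i j) = πθ j)
    (hπθ'0 : ∀ i, 0 ≤ πθ' i) (hπθ'1 : ∑ i, πθ' i = 1)
    (hπθ'stat : ∀ j, ∑ i, πθ' i * (∑ a, θ' i a * p a i j) = πθ' j)
    (Jmu Jmu' Jms Jms' : ℝ)
    (hJmu : Jmu = ∑ i, πθ i * ∑ a, θ i a * r i a)
    (hJmu' : Jmu' = ∑ i, πθ' i * ∑ a, θ' i a * r i a)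
    (hJms : Jms = ∑ i, πθ i * ∑ a, θ i a * (r i a - β * (r i a - Jmu) ^ 2))
    (hJms' : Jms' = ∑ i, πθ' i * ∑ a, θ' i a * (r i a - β * (r i a - Jmu') ^ 2))
    (g : Fin S → ℝ)
    (hg : ∀ i, g i = (∑ a, θ i a * (r i a - β * (r i a - Jmu) ^ 2)) - Jms
      + ∑ j, (∑ a, θ i a * p a i j) * g j) :
    Jms' - Jms =
      (∑ i, πθ' i * ∑ a, (θ' i a - θ i a) *
        ((∑ j, p a i j * g j) + r i a - β * (r i a) ^ 2 + 2 * β * Jmu * r i a))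
      + β * (Jmu' - Jmu) ^ 2 :=
  mean_variance_randomized_policy_difference_general S A p r β θ θ' hθ1 hθ'1 πθ' hπθ'1 hπθ'stat Jmu
    Jmu' Jms Jms' hJmu' hJms' g hg
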